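/- arXiv:2010.03906 — 3 statements merged into one kernel-verified Lean document; each statement's English description precedes it below -/
import Mathlib

section
/- Injectivity of projection: Let δ ∈ (0, 1/2) and let Σ ⊂ ℝ^n, p ∈ Σ, r > 0, and suppose η ∈ Σ ∩ B_r(p) satisfies: dist(η, p + F) ≤ δr and dist(ξ, p + F) ≤ δr for a fixed m-plane F, and for every ρ ∈ (0, r) there is an m-plane Q_ρ with ∠(Q_ρ, F) + δ < 1 such that every point of Σ ∩ B_ρ(η) lies within distance δρ of (η + Q_ρ) ∩ B_ρ(η). Then for every ξ ∈ Σ ∩ B_r(p) with ξ ≠ η satisfying dist(ξ, p+F) ≤ δr, one has Π_{p+F}(ξ) ≠ Π_{p+F}(η). -/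
open Metric Real Filter

noncomputable def pr {n : ℕ} (F : Submodule ℝ (EuclideanSpace ℝ (Fin n))) :
    EuclideanSpace ℝ (Fin n) →L[ℝ] EuclideanSpace ℝ (Fin n) :=
  F.subtypeL.comp (F.orthogonalProjectionOnto)

noncomputable def graphSet {n : ℕ} (F : Submodule ℝ (EuclideanSpace ℝ (Fin n)))
    (u : F → Fᗮ) : Set (EuclideanSpace ℝ (Fin n)) :=
  Set.range fun z : F => (z : EuclideanSpace ℝ (Fin n)) + (u z : EuclideanSpace ℝ (Fin n))

noncomputable def cone {n : ℕ} (x : EuclideanSpace ℝ (Fin n)) (β : ℝ)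
    (F : Submodule ℝ (EuclideanSpace ℝ (Fin n))) : Set (EuclideanSpace ℝ (Fin n)) :=
  {z | ‖pr Fᗮ (z - x)‖ ≤ β * ‖pr F (z - x)‖}

/-!
If `ξ` and `η` had the same projection to `p + F`, then `x = ξ - η` would be a
nonzero vector of `Fᗮ` of length `d ≤ 2δr < r`. At a scale `ρ ∈ (d, min r (3d/2))` the point `ξ`
lies in `B_ρ(η)`, so `x` is `δρ`-close to the plane `Q = Q_ρ`. But `Π_Q x = (Π_Q - Π_F) x` has
length at most `α d` with `α = ∠(Q, F) < 1 - δ`, so by Pythagoras `‖Π_{Qᗮ} x‖² ≥ (1 - α²) d²`,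
which exceeds `(2δ - δ²) d² ≥ (3δd/2)² > (δρ)²` since `δ < 1/2`.
-/

namespace Submodule

variable {n : ℕ} (K : Submodule ℝ (EuclideanSpace ℝ (Fin n)))

theorem pr_eq_starProjection : pr K = K.starProjection := rfl

theorem pr_apply_eq_zero_iff {x : EuclideanSpace ℝ (Fin n)} : pr K x = 0 ↔ x ∈ Kᗮ :=
  K.starProjection_apply_eq_zero_iff

theorem pr_apply_of_mem {x : EuclideanSpace ℝ (Fin n)} (hx : x ∈ K) : pr K x = x :=
  K.starProjection_eq_self_iff.mpr hx

theorem norm_pr_orthogonal_sub_le {x v : EuclideanSpace ℝ (Fin n)} (hv : v ∈ K) :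
    ‖pr Kᗮ x‖ ≤ ‖x - v‖ := by
  calc ‖pr Kᗮ x‖ = ‖pr Kᗮ (x - v)‖ := by
        rw [map_sub, pr_eq_starProjection Kᗮ, K.starProjection_orthogonal_apply_eq_zero hv,
          sub_zero]
    _ ≤ ‖x - v‖ := Kᗮ.norm_starProjection_apply_le _

theorem norm_pr_orthogonal_le_infDist {a z : EuclideanSpace ℝ (Fin n)}
    {S : Set (EuclideanSpace ℝ (Fin n))}
    (hSK : S ⊆ (fun v => a + v) '' (K : Set (EuclideanSpace ℝ (Fin n)))) (hS : S.Nonempty) :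
    ‖pr Kᗮ (z - a)‖ ≤ infDist z S := by
  refine (le_infDist hS).mpr fun y hy => ?_
  obtain ⟨v, hv, rfl⟩ := hSK hy
  calc ‖pr Kᗮ (z - a)‖ ≤ ‖z - a - v‖ := K.norm_pr_orthogonal_sub_le hv
    _ = dist z (a + v) := by rw [dist_eq_norm, sub_sub]

theorem norm_sub_le_infDist_add_infDist {p ξ η : EuclideanSpace ℝ (Fin n)}
    (h : pr K (ξ - η) = 0) :
    ‖ξ - η‖ ≤ infDist ξ ((fun v => p + v) '' (K : Set (EuclideanSpace ℝ (Fin n)))) +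
      infDist η ((fun v => p + v) '' (K : Set (EuclideanSpace ℝ (Fin n)))) := by
  have hne : ((fun v => p + v) '' (K : Set (EuclideanSpace ℝ (Fin n)))).Nonempty :=
    ⟨p + 0, 0, K.zero_mem, rfl⟩
  calc ‖ξ - η‖ = ‖pr Kᗮ (ξ - p) - pr Kᗮ (η - p)‖ := by
        rw [← map_sub, sub_sub_sub_cancel_right, Kᗮ.pr_apply_of_mem (K.pr_apply_eq_zero_iff.mp h)]
    _ ≤ ‖pr Kᗮ (ξ - p)‖ + ‖pr Kᗮ (η - p)‖ := norm_sub_le _ _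
    _ ≤ _ := add_le_add (K.norm_pr_orthogonal_le_infDist subset_rfl hne)
        (K.norm_pr_orthogonal_le_infDist subset_rfl hne)

theorem one_sub_sq_mul_sq_le_norm_pr_orthogonal_sq (F : Submodule ℝ (EuclideanSpace ℝ (Fin n)))
    {x : EuclideanSpace ℝ (Fin n)} (hx : pr F x = 0) :
    (1 - ‖pr K - pr F‖ ^ 2) * ‖x‖ ^ 2 ≤ ‖pr Kᗮ x‖ ^ 2 := by
  have hK : ‖pr K x‖ ≤ ‖pr K - pr F‖ * ‖x‖ := by
    simpa [hx] using (pr K - pr F).le_opNorm x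
  have hpyth : ‖x‖ ^ 2 = ‖pr K x‖ ^ 2 + ‖pr Kᗮ x‖ ^ 2 :=
    K.norm_sq_eq_add_norm_sq_starProjection x
  nlinarith [pow_le_pow_left₀ (norm_nonneg _) hK 2]

theorem mul_norm_lt_norm_pr_orthogonal (F : Submodule ℝ (EuclideanSpace ℝ (Fin n)))
    {x : EuclideanSpace ℝ (Fin n)} (hx : pr F x = 0) (hx0 : x ≠ 0) {δ : ℝ} (hδ0 : 0 < δ)
    (hδ1 : δ < 1 / 2) (hKF : ‖pr K - pr F‖ + δ < 1) :
    3 / 2 * δ * ‖x‖ < ‖pr Kᗮ x‖ := by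
  have hα : ‖pr K - pr F‖ ^ 2 < (1 - δ) ^ 2 :=
    pow_lt_pow_left₀ (by linarith) (norm_nonneg _) two_ne_zero
  have hcoef : (3 / 2 * δ) ^ 2 < 1 - ‖pr K - pr F‖ ^ 2 := by nlinarith
  refine lt_of_pow_lt_pow_left₀ 2 (norm_nonneg _) ?_
  calc (3 / 2 * δ * ‖x‖) ^ 2 = (3 / 2 * δ) ^ 2 * ‖x‖ ^ 2 := by ring
    _ < (1 - ‖pr K - pr F‖ ^ 2) * ‖x‖ ^ 2 := by gcongr
    _ ≤ ‖pr Kᗮ x‖ ^ 2 := K.one_sub_sq_mul_sq_le_norm_pr_orthogonal_sq F hx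

end Submodule

open Submodule

theorem injective_projection_general {n m : ℕ} (δ : ℝ) (hδ : δ ∈ Set.Ioo (0 : ℝ) (1 / 2))
    (Sig : Set (EuclideanSpace ℝ (Fin n))) (p : EuclideanSpace ℝ (Fin n))
    (r : ℝ)
    (F : Submodule ℝ (EuclideanSpace ℝ (Fin n)))
    (η : EuclideanSpace ℝ (Fin n))
    (hηdist : Metric.infDist η ((fun v => p + v) '' (F : Set (EuclideanSpace ℝ (Fin n)))) ≤ δ * r)
    (hQ : ∀ ρ ∈ Set.Ioo (0 : ℝ) r, ∃ Q : Submodule ℝ (EuclideanSpace ℝ (Fin n)),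
      Module.finrank ℝ Q = m ∧ ‖pr Q - pr F‖ + δ < 1 ∧
      ∀ z ∈ Sig ∩ ball η ρ,
        Metric.infDist z (((fun v => η + v) '' (Q : Set (EuclideanSpace ℝ (Fin n)))) ∩ ball η ρ)
          ≤ δ * ρ)
    (ξ : EuclideanSpace ℝ (Fin n)) (hξ : ξ ∈ Sig ∩ ball p r) (hne : ξ ≠ η)
    (hξdist : Metric.infDist ξ ((fun v => p + v) '' (F : Set (EuclideanSpace ℝ (Fin n)))) ≤ δ * r) :
    p + pr F (ξ - p) ≠ p + pr F (η - p) := by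
  obtain ⟨hδ0, hδ1⟩ := hδ
  intro hproj
  set x := ξ - η with hx
  have hxF : pr F x = 0 := by
    rw [hx, ← sub_sub_sub_cancel_right ξ η p, map_sub, add_left_cancel hproj, sub_self]
  have hd0 : 0 < ‖x‖ := norm_pos_iff.mpr (sub_ne_zero.mpr hne)
  have hdr : ‖x‖ ≤ 2 * (δ * r) := by
    linarith [F.norm_sub_le_infDist_add_infDist (p := p) hxF]
  obtain ⟨ρ, hdρ, hρ⟩ :=
    exists_between (lt_min (by nlinarith : ‖x‖ < r) (by linarith : ‖x‖ < 3 / 2 * ‖x‖))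
  have hρ0 : 0 < ρ := hd0.trans hdρ
  obtain ⟨Q, -, hα, hclose⟩ := hQ ρ ⟨hρ0, hρ.trans_le (min_le_left _ _)⟩
  have hξη : ξ ∈ ball η ρ := by rwa [mem_ball, dist_eq_norm]
  have hQx : ‖pr Qᗮ x‖ ≤ 3 / 2 * δ * ‖x‖ := calc
    ‖pr Qᗮ x‖ ≤ infDist ξ ((fun v => η + v) '' (Q : Set (EuclideanSpace ℝ (Fin n))) ∩ ball η ρ) :=
      Q.norm_pr_orthogonal_le_infDist Set.inter_subset_left
        ⟨η, ⟨0, Q.zero_mem, add_zero η⟩, mem_ball_self hρ0⟩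
    _ ≤ δ * ρ := hclose ξ ⟨hξ.1, hξη⟩
    _ ≤ 3 / 2 * δ * ‖x‖ := by nlinarith [min_le_right r (3 / 2 * ‖x‖)]
  exact hQx.not_gt (Q.mul_norm_lt_norm_pr_orthogonal F hxF (sub_ne_zero.mpr hne) hδ0 hδ1 hα)

/-- Injectivity of the projection onto an approximating plane: under
Reifenberg-type closeness hypotheses at `η` on all scales `ρ < r`, two distinct
points of `Σ ∩ B_r(p)` close to `p + F` have distinct projections to `p+F`. -/
theorem injective_projection {n m : ℕ} (δ : ℝ) (hδ : δ ∈ Set.Ioo (0 : ℝ) (1 / 2))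
    (Sig : Set (EuclideanSpace ℝ (Fin n))) (p : EuclideanSpace ℝ (Fin n))
    (hp : p ∈ Sig) (r : ℝ) (hr : 0 < r)
    (F : Submodule ℝ (EuclideanSpace ℝ (Fin n))) (hF : Module.finrank ℝ F = m)
    (η : EuclideanSpace ℝ (Fin n)) (hη : η ∈ Sig ∩ ball p r)
    (hηdist : Metric.infDist η ((fun v => p + v) '' (F : Set (EuclideanSpace ℝ (Fin n)))) ≤ δ * r)
    (hQ : ∀ ρ ∈ Set.Ioo (0 : ℝ) r, ∃ Q : Submodule ℝ (EuclideanSpace ℝ (Fin n)),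
      Module.finrank ℝ Q = m ∧ ‖pr Q - pr F‖ + δ < 1 ∧
      ∀ z ∈ Sig ∩ ball η ρ,
        Metric.infDist z (((fun v => η + v) '' (Q : Set (EuclideanSpace ℝ (Fin n)))) ∩ ball η ρ)
          ≤ δ * ρ)
    (ξ : EuclideanSpace ℝ (Fin n)) (hξ : ξ ∈ Sig ∩ ball p r) (hne : ξ ≠ η)
    (hξdist : Metric.infDist ξ ((fun v => p + v) '' (F : Set (EuclideanSpace ℝ (Fin n)))) ≤ δ * r) :
    p + pr F (ξ - p) ≠ p + pr F (η - p) :=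
  injective_projection_general δ hδ Sig p r F η hηdist hQ ξ hξ hne hξdist
end

section
/- Let F be an m-dimensional subspace of ℝ^n, u ∈ C²(F, F⊥), and let g(ξ) := ξ + u(ξ). For points p = g(x), q = g(y) with x, y ∈ F ∩ B_N(0), the orthogonal projection of p − q onto the orthogonal complement of the tangent plane T_q := {v + Du(y)v : v ∈ F} satisfies |Π_{T_q⊥}(p − q)| ≤ ‖D²u‖_{C⁰(F ∩ B_N(0))} · |p − q|². -/
/-!
Write `p - q = (x - y) + (u x - u y)` with `x - y ∈ F` and `u x - u y ∈ F⊥`. The vector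
`(x - y) + Du(y)(x - y)` lies in `T_q`, so the projection of `p - q` onto `T_q⊥` is at most the
first-order Taylor remainder `|u x - u y - Du(y)(x - y)| ≤ ‖D²u‖ |x - y|²`, and `|x - y| ≤ |p - q|`
by Pythagoras.
-/

open Metric Real Filter

set_option synthInstance.maxHeartbeats 1000000
set_option maxHeartbeats 1000000

theorem Convex.norm_image_sub_sub_fderiv_le {E G : Type*} [NormedAddCommGroup E]
    [NormedSpace ℝ E] [NormedAddCommGroup G] [NormedSpace ℝ G] {f : E → G} {s : Set E} {C : ℝ}
    {x y : E} (hs : Convex ℝ s) (hf : ∀ z ∈ s, DifferentiableAt ℝ f z)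
    (hf' : ∀ z ∈ s, DifferentiableAt ℝ (fderiv ℝ f) z)
    (bound : ∀ z ∈ s, ‖fderiv ℝ (fderiv ℝ f) z‖ ≤ C) (hx : x ∈ s) (hy : y ∈ s) :
    ‖f x - f y - fderiv ℝ f y (x - y)‖ ≤ C * ‖x - y‖ ^ 2 := by
  have hC : 0 ≤ C := (norm_nonneg (fderiv ℝ (fderiv ℝ f) y)).trans (bound y hy)
  have hseg : segment ℝ y x ⊆ s := hs.segment_subset hy hx
  have hlip : ∀ z ∈ segment ℝ y x, ‖fderiv ℝ f z - fderiv ℝ f y‖ ≤ C * ‖x - y‖ := fun z hz =>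
    calc ‖fderiv ℝ f z - fderiv ℝ f y‖ ≤ C * ‖z - y‖ :=
          hs.norm_image_sub_le_of_norm_fderiv_le hf' bound hy (hseg hz)
      _ ≤ C * ‖x - y‖ := by gcongr; exact norm_sub_le_of_mem_segment hz
  calc ‖f x - f y - fderiv ℝ f y (x - y)‖ ≤ C * ‖x - y‖ * ‖x - y‖ :=
        (convex_segment y x).norm_image_sub_le_of_norm_fderiv_le' (fun z hz => hf z (hseg hz))
          hlip (left_mem_segment ℝ y x) (right_mem_segment ℝ y x)
    _ = C * ‖x - y‖ ^ 2 := by ring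

theorem Submodule.norm_le_norm_add_of_mem_orthogonal {E : Type*} [NormedAddCommGroup E]
    [InnerProductSpace ℝ E] {K : Submodule ℝ E} {a b : E} (ha : a ∈ K) (hb : b ∈ Kᗮ) :
    ‖a‖ ≤ ‖a + b‖ := by
  refine (sq_le_sq₀ (norm_nonneg _) (norm_nonneg _)).1 ?_
  rw [norm_add_sq_real, K.inner_right_of_mem_orthogonal ha hb]
  linarith [sq_nonneg ‖b‖]

theorem norm_pr_orthogonal_le_norm_sub {n : ℕ} (K : Submodule ℝ (EuclideanSpace ℝ (Fin n)))
    (v : EuclideanSpace ℝ (Fin n)) {w : EuclideanSpace ℝ (Fin n)} (hw : w ∈ K) :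
    ‖pr Kᗮ v‖ ≤ ‖v - w‖ := by
  have hw0 : pr Kᗮ w = 0 := by
    simp [pr, Submodule.orthogonalProjectionOnto_orthogonal_apply_eq_zero hw]
  calc ‖pr Kᗮ v‖ = ‖pr Kᗮ (v - w)‖ := by rw [map_sub, hw0, sub_zero]
    _ ≤ ‖v - w‖ := Kᗮ.norm_orthogonalProjectionOnto_apply_le _

theorem projection_tangent_complement_bound_general {n : ℕ} (N : ℕ) (C : ℝ)
    (F : Submodule ℝ (EuclideanSpace ℝ (Fin n)))
    (u : F → Fᗮ) (hu : ContDiff ℝ 2 u)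
    (hC : ∀ z : F, ‖z‖ < (N : ℝ) → @Norm.norm _ (@ContinuousLinearMap.hasOpNorm ℝ ℝ F (F →L[ℝ] Fᗮ) _ _ _ _ _ _ (RingHom.id ℝ)) (fderiv ℝ (fderiv ℝ u) z) ≤ C)
    (x y : F) (hx : ‖x‖ < (N : ℝ)) (hy : ‖y‖ < (N : ℝ)) :
    ‖pr (LinearMap.range (F.subtype + Fᗮ.subtype ∘ₗ (fderiv ℝ u y).toLinearMap))ᗮ
        (((x : EuclideanSpace ℝ (Fin n)) + u x) - ((y : EuclideanSpace ℝ (Fin n)) + u y))‖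
      ≤ C * ‖((x : EuclideanSpace ℝ (Fin n)) + u x) - ((y : EuclideanSpace ℝ (Fin n)) + u y)‖ ^ 2 := by
  have hC0 : 0 ≤ C := (ContinuousLinearMap.opNorm_nonneg _).trans (hC y hy)
  have htaylor : ‖u x - u y - fderiv ℝ u y (x - y)‖ ≤ C * ‖x - y‖ ^ 2 :=
    (convex_ball (0 : F) N).norm_image_sub_sub_fderiv_le
      (fun z _ => hu.differentiable (by norm_num) z)
      (fun z _ => (hu.fderiv_right (m := 1) (by norm_num)).differentiable one_ne_zero z)
      (fun z hz => hC z (mem_ball_zero_iff.1 hz)) (mem_ball_zero_iff.2 hx)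
      (mem_ball_zero_iff.2 hy)
  have hpq : ((x : EuclideanSpace ℝ (Fin n)) + u x) - ((y : EuclideanSpace ℝ (Fin n)) + u y)
      = ((x - y : F) : EuclideanSpace ℝ (Fin n)) + (u x - u y : Fᗮ) := by
    push_cast; abel
  have hxy : ‖x - y‖ ≤ ‖((x : EuclideanSpace ℝ (Fin n)) + u x)
      - ((y : EuclideanSpace ℝ (Fin n)) + u y)‖ := by
    rw [hpq, Submodule.coe_norm (x - y)]
    exact Submodule.norm_le_norm_add_of_mem_orthogonal (x - y).2 (u x - u y).2
  have htangent : ((x - y : F) : EuclideanSpace ℝ (Fin n)) + (fderiv ℝ u y (x - y) : Fᗮ)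
      ∈ LinearMap.range (F.subtype + Fᗮ.subtype ∘ₗ (fderiv ℝ u y).toLinearMap) :=
    ⟨x - y, rfl⟩
  calc _ ≤ ‖((x - y : F) : EuclideanSpace ℝ (Fin n)) + (u x - u y : Fᗮ)
          - (((x - y : F) : EuclideanSpace ℝ (Fin n)) + (fderiv ℝ u y (x - y) : Fᗮ))‖ := by
        rw [hpq]; exact norm_pr_orthogonal_le_norm_sub _ _ htangent
    _ = ‖u x - u y - fderiv ℝ u y (x - y)‖ := by
        rw [add_sub_add_left_eq_sub, ← Submodule.coe_sub, Submodule.norm_coe]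
    _ ≤ C * ‖x - y‖ ^ 2 := htaylor
    _ ≤ _ := by gcongr

/-- For a `C²` function `u : F → F⊥` with second derivative bounded by `C` on
`F ∩ B_N(0)`, and graph points `p = x + u(x)`, `q = y + u(y)` with
`x, y ∈ F ∩ B_N(0)`, the projection of `p - q` onto the orthogonal complement
of the tangent plane at `q` is bounded by `C |p - q|²`. -/
theorem projection_tangent_complement_bound {n m : ℕ} (N : ℕ) (C : ℝ)
    (F : Submodule ℝ (EuclideanSpace ℝ (Fin n))) (hF : Module.finrank ℝ F = m)
    (u : F → Fᗮ) (hu : ContDiff ℝ 2 u)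
    (hC : ∀ z : F, ‖z‖ < (N : ℝ) → @Norm.norm _ (@ContinuousLinearMap.hasOpNorm ℝ ℝ F (F →L[ℝ] Fᗮ) _ _ _ _ _ _ (RingHom.id ℝ)) (fderiv ℝ (fderiv ℝ u) z) ≤ C)
    (x y : F) (hx : ‖x‖ < (N : ℝ)) (hy : ‖y‖ < (N : ℝ)) :
    ‖pr (LinearMap.range (F.subtype + Fᗮ.subtype ∘ₗ (fderiv ℝ u y).toLinearMap))ᗮ
        (((x : EuclideanSpace ℝ (Fin n)) + u x) - ((y : EuclideanSpace ℝ (Fin n)) + u y))‖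
      ≤ C * ‖((x : EuclideanSpace ℝ (Fin n)) + u x) - ((y : EuclideanSpace ℝ (Fin n)) + u y)‖ ^ 2 :=
  projection_tangent_complement_bound_general N C F u hu hC x y hx hy
end

section
/- Let F be an m-dimensional subspace of ℝ^n and u : F → F⊥ Lipschitz with Lip u ≤ β. Then for every x ∈ F and r > 0, the orthogonal projection Π_F of graph u ∩ B_r(x + u(x)) onto F contains the disk B_{r/√(1+β²)}(x) ∩ F; consequently the m-dimensional Hausdorff measure of graph u ∩ B_r(x+u(x)) is at least ω_m (r/√(1+β²))^m, where ω_m is the volume of the unit ball in ℝ^m. -/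
open Metric Real Filter

open MeasureTheory

/-!
With `g y = y + u y`, Pythagoras in `F ⊕ Fᗮ` gives `‖g y - g x‖ ≤ √(1 + β²) ‖y - x‖`, so `g` maps
the disk of radius `r / √(1 + β²)` about `x` into `B_r (g x)`; since `Π_F ∘ g = id`, that disk
lies in the projection of the graph piece. The projection is `1`-Lipschitz, so it does not increase
`μH[m]`, and the disk is isometric to a Euclidean `m`-ball, whose measure scales like `ρ ^ m`.
-/

section GraphOverSubspace

variable {E : Type*} [NormedAddCommGroup E] [InnerProductSpace ℝ E] {K : Submodule ℝ E}

theorem norm_graph_sub_le {β : ℝ} {u : K → Kᗮ} (hlip : ∀ a b : K, ‖u a - u b‖ ≤ β * ‖a - b‖)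
    (a b : K) : ‖((a : E) + u a) - ((b : E) + u b)‖ ≤ √(1 + β ^ 2) * ‖a - b‖ := by
  have hsplit : ((a : E) + u a) - ((b : E) + u b) = ((a - b : K) : E) + ((u a - u b : Kᗮ) : E) := by
    push_cast; abel
  have hpyth :
      ‖((a - b : K) : E) + ((u a - u b : Kᗮ) : E)‖ ^ 2 = ‖a - b‖ ^ 2 + ‖u a - u b‖ ^ 2 := by
    simp only [sq]
    exact norm_add_sq_eq_norm_sq_add_norm_sq_real
      (Submodule.inner_right_of_mem_orthogonal (a - b).2 (u a - u b).2)
  have hu : ‖u a - u b‖ ^ 2 ≤ (β * ‖a - b‖) ^ 2 := pow_le_pow_left₀ (norm_nonneg _) (hlip a b) 2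
  rw [hsplit, ← Real.sqrt_sq (norm_nonneg (_ : E)), ← Real.sqrt_sq (norm_nonneg (a - b)),
    ← Real.sqrt_mul (by positivity)]
  apply Real.sqrt_le_sqrt
  nlinarith

theorem ball_inter_subset_starProjection_image_graph [K.HasOrthogonalProjection] {β : ℝ}
    {u : K → Kᗮ} (hlip : ∀ a b : K, ‖u a - u b‖ ≤ β * ‖a - b‖) (x : K) (r : ℝ) :
    ball (x : E) (r / √(1 + β ^ 2)) ∩ K ⊆
      K.starProjection '' (Set.range (fun z : K => (z : E) + u z) ∩ ball ((x : E) + u x) r) := by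
  rintro y ⟨hy, hyK⟩
  lift y to K using hyK
  refine ⟨y + u y, ⟨⟨y, rfl⟩, ?_⟩, ?_⟩
  · rw [mem_ball_iff_norm]
    rw [mem_ball_iff_norm, lt_div_iff₀' (by positivity)] at hy
    exact (norm_graph_sub_le hlip y x).trans_lt hy
  · rw [map_add, Submodule.starProjection_mem_subspace_eq_self,
      (Submodule.starProjection_apply_eq_zero_iff K).2 (u y).2, add_zero]

theorem hausdorffMeasure_ball_inter_submodule [MeasurableSpace E] [BorelSpace E]
    [FiniteDimensional ℝ K] {m : ℕ} (hK : Module.finrank ℝ K = m) {d : ℝ} (hd : 0 ≤ d)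
    {x : E} (hx : x ∈ K) (ρ : ℝ) :
    μH[d] (ball x ρ ∩ K) = μH[d] (ball (0 : EuclideanSpace ℝ (Fin m)) ρ) := by
  let e : EuclideanSpace ℝ (Fin m) ≃ₗᵢ[ℝ] K :=
    ((stdOrthonormalBasis ℝ K).reindex (finCongr hK)).repr.symm
  let f : EuclideanSpace ℝ (Fin m) → E := fun v => x + e v
  have hf : Isometry f := by
    refine Isometry.of_dist_eq fun v w => ?_
    simp only [f, dist_eq_norm, add_sub_add_left_eq_sub]
    rw [← Submodule.coe_sub, ← map_sub]
    exact e.norm_map (v - w)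
  have himage : f '' ball 0 ρ = ball x ρ ∩ K := by
    ext y
    constructor
    · rintro ⟨v, hv, rfl⟩
      refine ⟨?_, K.add_mem hx (e v).2⟩
      rw [mem_ball_iff_norm, add_sub_cancel_left]
      exact (e.norm_map v).trans_lt (mem_ball_zero_iff.1 hv)
    · rintro ⟨hy, hyK⟩
      refine ⟨e.symm ⟨y - x, K.sub_mem hyK hx⟩, ?_, by simp [f]⟩
      rw [mem_ball_zero_iff, e.symm.norm_map]
      exact mem_ball_iff_norm.1 hy
  rw [← himage, hf.hausdorffMeasure_image (Or.inl hd)]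

theorem hausdorffMeasure_ball_eq {F : Type*} [NormedAddCommGroup F] [NormedSpace ℝ F]
    [MeasurableSpace F] [BorelSpace F] {d : ℝ} (hd : 0 ≤ d) {ρ : ℝ} (hρ : 0 < ρ) :
    μH[d] (ball (0 : F) ρ) = μH[d] (ball (0 : F) 1) * ENNReal.ofReal (ρ ^ d) := by
  rw [← smul_unitBall_of_pos hρ, Measure.hausdorffMeasure_smul₀ hd hρ.ne', ENNReal.smul_def,
    mul_comm, ENNReal.coe_rpow_of_nonneg _ hd, ← ENNReal.ofReal_rpow_of_pos hρ,
    ← enorm_eq_nnnorm, Real.enorm_eq_ofReal hρ.le, smul_eq_mul]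

end GraphOverSubspace

theorem pr_eq_starProjection {n : ℕ} (F : Submodule ℝ (EuclideanSpace ℝ (Fin n))) :
    pr F = F.starProjection :=
  rfl

theorem graph_measure_lower_bound_general {n m : ℕ}
    (F : Submodule ℝ (EuclideanSpace ℝ (Fin n))) (hF : Module.finrank ℝ F = m)
    (β : ℝ)
    (u : F → Fᗮ) (hlip : ∀ a b : F, ‖u a - u b‖ ≤ β * ‖a - b‖)
    (x : F) (r : ℝ) (hr : 0 < r) :
    (ball ((x : EuclideanSpace ℝ (Fin n))) (r / Real.sqrt (1 + β ^ 2)) ∩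
        (F : Set (EuclideanSpace ℝ (Fin n))) ⊆
      pr F '' (graphSet F u ∩ ball ((x : EuclideanSpace ℝ (Fin n)) + u x) r)) ∧
    μH[(m : ℝ)] (ball (0 : EuclideanSpace ℝ (Fin m)) 1) *
        ENNReal.ofReal ((r / Real.sqrt (1 + β ^ 2)) ^ m) ≤
      μH[(m : ℝ)] (graphSet F u ∩ ball ((x : EuclideanSpace ℝ (Fin n)) + u x) r) := by
  rw [pr_eq_starProjection]
  have hdisk := ball_inter_subset_starProjection_image_graph hlip x r
  refine ⟨hdisk, ?_⟩
  set ρ := r / √(1 + β ^ 2)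
  set S := graphSet F u ∩ ball ((x : EuclideanSpace ℝ (Fin n)) + u x) r
  have hρ : 0 < ρ := by positivity
  calc μH[(m : ℝ)] (ball (0 : EuclideanSpace ℝ (Fin m)) 1) * ENNReal.ofReal (ρ ^ m)
      = μH[(m : ℝ)] (ball (0 : EuclideanSpace ℝ (Fin m)) ρ) := by
        rw [hausdorffMeasure_ball_eq m.cast_nonneg hρ, Real.rpow_natCast]
    _ = μH[(m : ℝ)] (ball (x : EuclideanSpace ℝ (Fin n)) ρ ∩ F) :=
        (hausdorffMeasure_ball_inter_submodule hF m.cast_nonneg x.2 ρ).symm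
    _ ≤ μH[(m : ℝ)] (F.starProjection '' S) := measure_mono hdisk
    _ ≤ μH[(m : ℝ)] S := by
        simpa using F.lipschitzWith_starProjection.hausdorffMeasure_image_le m.cast_nonneg S

/-- The projection onto `F` of `graph u ∩ B_r(x+u(x))` contains the disk of
radius `r/√(1+β²)` around `x`, and the `m`-dimensional Hausdorff measure of
`graph u ∩ B_r(x+u(x))` is at least `ω_m (r/√(1+β²))^m`. -/
theorem graph_measure_lower_bound {n m : ℕ}
    (F : Submodule ℝ (EuclideanSpace ℝ (Fin n))) (hF : Module.finrank ℝ F = m)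
    (β : ℝ) (hβ : 0 ≤ β)
    (u : F → Fᗮ) (hlip : ∀ a b : F, ‖u a - u b‖ ≤ β * ‖a - b‖)
    (x : F) (r : ℝ) (hr : 0 < r) :
    (ball ((x : EuclideanSpace ℝ (Fin n))) (r / Real.sqrt (1 + β ^ 2)) ∩
        (F : Set (EuclideanSpace ℝ (Fin n))) ⊆
      pr F '' (graphSet F u ∩ ball ((x : EuclideanSpace ℝ (Fin n)) + u x) r)) ∧
    μH[(m : ℝ)] (ball (0 : EuclideanSpace ℝ (Fin m)) 1) *
        ENNReal.ofReal ((r / Real.sqrt (1 + β ^ 2)) ^ m) ≤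
      μH[(m : ℝ)] (graphSet F u ∩ ball ((x : EuclideanSpace ℝ (Fin n)) + u x) r) :=
  graph_measure_lower_bound_general F hF β u hlip x r hr
end
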